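/- Let 1 ≤ k ≤ d, and set α = ⌊(d−k)/2⌋ and β = ⌊(d−k+1)/2⌋. Then the Bonus Eggs egg-drop number H_{B,k}(d) — defined as Z_k(d) − 1 + M_k(d), where Z_k(d) is the number of ±1-sequences of length at most d whose proper partial sums all exceed −k and whose total sum is −k, and M_k(d) is the number of ±1-sequences of length exactly d all of whose partial sums exceed −k — satisfies H_{B,k}(d) = ∑_{m=1}^{α} (k/(2m+k)) · C(2m+k, m) + ∑_{n=β}^{β+k−1} C(d, n), where (k/(2m+k))·C(2m+k, m) = C(2m+k−1, m) − C(2m+k−1, m−1) is an integer. -/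
import Mathlib


/-- The partial sum `a 0 + a 1 + ⋯ + a i` of the sequence `a`. -/
def partialSum {n : ℕ} (a : Fin n → ℤ) (i : Fin n) : ℤ :=
  ∑ j ∈ Finset.univ.filter (fun j => j ≤ i), a j

/-- `a : Fin ℓ → ℤ` is a `±1`-sequence whose proper partial sums (over the first
`i` terms, `1 ≤ i < ℓ`) are all strictly greater than `-k` and whose total sum is
`-k`. -/
def ExhaustedAtEnd (k : ℕ) {ℓ : ℕ} (a : Fin ℓ → ℤ) : Prop :=
  (∀ i, a i = 1 ∨ a i = -1) ∧
  (∀ i : Fin ℓ, (i : ℕ) + 1 < ℓ → -(k : ℤ) < partialSum a i) ∧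
  (∑ i, a i) = -(k : ℤ)

/-- Binomial coefficient `C(a, b)` with integer lower index, equal to `0` when
`b < 0`. -/
def chooseInt (a : ℕ) (b : ℤ) : ℤ :=
  if 0 ≤ b then (a.choose b.toNat : ℤ) else 0


lemma partialSum_cons_zero {ℓ : ℕ} (x : ℤ) (b : Fin ℓ → ℤ) :
    partialSum (Fin.cons x b) 0 = x := by
  unfold partialSum
  rw [Finset.sum_filter, Fin.sum_univ_succ]
  simp [Fin.le_def, Fin.succ_ne_zero, Fin.le_zero_iff]

lemma partialSum_cons_succ {ℓ : ℕ} (x : ℤ) (b : Fin ℓ → ℤ) (i : Fin ℓ) :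
    partialSum (Fin.cons x b) i.succ = x + partialSum b i := by
  unfold partialSum
  rw [Finset.sum_filter, Fin.sum_univ_succ, Finset.sum_filter]
  simp [Fin.zero_le, Fin.succ_le_succ_iff]

lemma be_finite {ℓ : ℕ} (P : (Fin ℓ → ℤ) → Prop)
    (hpm : ∀ a, P a → ∀ i, a i = 1 ∨ a i = -1) :
    Finite {a : Fin ℓ → ℤ // P a} := by
  apply Finite.of_injective (fun a : {a : Fin ℓ → ℤ // P a} => fun i => decide (a.1 i = 1))
  rintro ⟨a, ha⟩ ⟨b, hb⟩ h
  ext i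
  have := congrFun h i
  simp only [decide_eq_decide] at this
  have h1 := hpm a ha i
  have h2 := hpm b hb i
  show a i = b i
  omega

noncomputable def splitEquiv {ℓ : ℕ} (P : (Fin (ℓ+1) → ℤ) → Prop)
    (Q R : (Fin ℓ → ℤ) → Prop)
    (hpm : ∀ a, P a → ∀ i, a i = 1 ∨ a i = -1)
    (h1 : ∀ b, P (Fin.cons 1 b) ↔ Q b)
    (h2 : ∀ b, P (Fin.cons (-1) b) ↔ R b) :
    {a : Fin (ℓ+1) → ℤ // P a} ≃ {b : Fin ℓ → ℤ // Q b} ⊕ {b : Fin ℓ → ℤ // R b} where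
  toFun a := if h : a.1 0 = 1 then
      Sum.inl ⟨Fin.tail a.1, (h1 _).1 (by rw [← h, Fin.cons_self_tail]; exact a.2)⟩
    else
      Sum.inr ⟨Fin.tail a.1, (h2 _).1 (by
        have : a.1 0 = -1 := (hpm a.1 a.2 0).resolve_left h
        rw [← this, Fin.cons_self_tail]; exact a.2)⟩
  invFun x := match x with
    | Sum.inl ⟨b, hb⟩ => ⟨Fin.cons 1 b, (h1 b).2 hb⟩
    | Sum.inr ⟨b, hb⟩ => ⟨Fin.cons (-1) b, (h2 b).2 hb⟩
  left_inv a := by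
    by_cases h : a.1 0 = 1
    · simp only [h, dif_pos]
      ext1
      simp only
      rw [← h, Fin.cons_self_tail]
    · simp only [h, dif_neg, not_false_iff]
      ext1
      simp only
      have : a.1 0 = -1 := (hpm a.1 a.2 0).resolve_left h
      rw [← this, Fin.cons_self_tail]
  right_inv x := by
    rcases x with ⟨b, hb⟩ | ⟨b, hb⟩
    · simp [Fin.tail_cons]
    · have : ((-1:ℤ)) ≠ 1 := by norm_num
      simp [Fin.tail_cons, Fin.cons_zero, this]

def MP (k ℓ : ℕ) (a : Fin ℓ → ℤ) : Prop :=
  (∀ i, a i = 1 ∨ a i = -1) ∧ ∀ i, -(k:ℤ) < partialSum a i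

lemma pm1_cons {ℓ : ℕ} (x : ℤ) (b : Fin ℓ → ℤ) :
    (∀ i, (Fin.cons x b : Fin (ℓ+1) → ℤ) i = 1 ∨ (Fin.cons x b : Fin (ℓ+1) → ℤ) i = -1) ↔
      ((x = 1 ∨ x = -1) ∧ ∀ i, b i = 1 ∨ b i = -1) := by
  rw [Fin.forall_fin_succ]
  simp [Fin.cons_zero, Fin.cons_succ]

lemma MP_cons_one {k ℓ : ℕ} (b : Fin ℓ → ℤ) :
    MP k (ℓ+1) (Fin.cons 1 b) ↔ MP (k+1) ℓ b := by
  unfold MP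
  rw [pm1_cons, Fin.forall_fin_succ]
  simp only [partialSum_cons_zero, partialSum_cons_succ]
  constructor
  · rintro ⟨⟨-, hpm⟩, -, hs⟩
    exact ⟨hpm, fun i => by have := hs i; push_cast; linarith⟩
  · rintro ⟨hpm, hs⟩
    refine ⟨⟨by norm_num, hpm⟩, by have := Int.natCast_nonneg k; linarith, fun i => ?_⟩
    have := hs i; push_cast at this ⊢; linarith

lemma MP_cons_neg {k ℓ : ℕ} (b : Fin ℓ → ℤ) :
    MP (k+2) (ℓ+1) (Fin.cons (-1) b) ↔ MP (k+1) ℓ b := by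
  unfold MP
  rw [pm1_cons, Fin.forall_fin_succ]
  simp only [partialSum_cons_zero, partialSum_cons_succ]
  constructor
  · rintro ⟨⟨-, hpm⟩, -, hs⟩
    exact ⟨hpm, fun i => by have := hs i; push_cast at this ⊢; linarith⟩
  · rintro ⟨hpm, hs⟩
    refine ⟨⟨by norm_num, hpm⟩, by have := Int.natCast_nonneg k; push_cast; linarith, fun i => ?_⟩
    have := hs i; push_cast at this ⊢; linarith

lemma MP_cons_neg_one {ℓ : ℕ} (b : Fin ℓ → ℤ) :
    ¬ MP 1 (ℓ+1) (Fin.cons (-1) b) := by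
  rintro ⟨-, hs⟩
  have := hs 0
  rw [partialSum_cons_zero] at this
  norm_num at this

lemma sum_cons' {ℓ : ℕ} (x : ℤ) (b : Fin ℓ → ℤ) :
    ∑ i, (Fin.cons x b : Fin (ℓ+1) → ℤ) i = x + ∑ i, b i := by
  rw [Fin.sum_univ_succ]
  simp [Fin.cons_zero, Fin.cons_succ]

lemma EP_cons_one {k ℓ : ℕ} (b : Fin ℓ → ℤ) :
    ExhaustedAtEnd k (Fin.cons 1 b : Fin (ℓ+1) → ℤ) ↔ ExhaustedAtEnd (k+1) b := by
  unfold ExhaustedAtEnd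
  rw [pm1_cons, Fin.forall_fin_succ, sum_cons']
  simp only [partialSum_cons_zero, partialSum_cons_succ, Fin.val_succ, Fin.val_zero]
  constructor
  · rintro ⟨⟨-, hpm⟩, ⟨-, hs⟩, hsum⟩
    refine ⟨hpm, fun i hi => ?_, by push_cast; linarith⟩
    have := hs i (by omega)
    push_cast at this ⊢; linarith
  · rintro ⟨hpm, hs, hsum⟩
    refine ⟨⟨by norm_num, hpm⟩,
      ⟨fun _ => by have := Int.natCast_nonneg k; linarith, fun i hi => ?_⟩,
      by push_cast at hsum ⊢; linarith⟩
    have := hs i (by omega)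
    push_cast at this ⊢; linarith

lemma EP_cons_neg {k ℓ : ℕ} (b : Fin ℓ → ℤ) :
    ExhaustedAtEnd (k+2) (Fin.cons (-1) b : Fin (ℓ+1) → ℤ) ↔ ExhaustedAtEnd (k+1) b := by
  unfold ExhaustedAtEnd
  rw [pm1_cons, Fin.forall_fin_succ, sum_cons']
  simp only [partialSum_cons_zero, partialSum_cons_succ, Fin.val_succ, Fin.val_zero]
  constructor
  · rintro ⟨⟨-, hpm⟩, ⟨-, hs⟩, hsum⟩
    refine ⟨hpm, fun i hi => ?_, by push_cast at hsum ⊢; linarith⟩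
    have := hs i (by omega)
    push_cast at this ⊢; linarith
  · rintro ⟨hpm, hs, hsum⟩
    refine ⟨⟨by norm_num, hpm⟩,
      ⟨fun _ => by have := Int.natCast_nonneg k; push_cast; linarith, fun i hi => ?_⟩,
      by push_cast at hsum ⊢; linarith⟩
    have := hs i (by omega)
    push_cast at this ⊢; linarith

lemma EP_cons_neg_one {ℓ : ℕ} (b : Fin (ℓ+1) → ℤ) :
    ¬ ExhaustedAtEnd 1 (Fin.cons (-1) b : Fin (ℓ+2) → ℤ) := by
  rintro ⟨-, hs, -⟩
  have := hs 0 (by simp)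
  rw [partialSum_cons_zero] at this
  norm_num at this

def mf : ℕ → ℕ → ℕ
  | 0, _ => 1
  | _+1, 0 => 0
  | ℓ+1, 1 => mf ℓ 2
  | ℓ+1, (j+2) => mf ℓ (j+3) + mf ℓ (j+1)

def ef : ℕ → ℕ → ℕ
  | 0, k => if k = 0 then 1 else 0
  | _+1, 0 => 0
  | ℓ+1, 1 => ef ℓ 2 + (if ℓ = 0 then 1 else 0)
  | ℓ+1, (j+2) => ef ℓ (j+3) + ef ℓ (j+1)

lemma card_false_subtype {ℓ : ℕ} : Nat.card {b : Fin ℓ → ℤ // False} = 0 := by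
  haveI : IsEmpty {b : Fin ℓ → ℤ // False} := ⟨fun x => x.2⟩
  exact Nat.card_of_isEmpty

lemma Mcard_eq (ℓ : ℕ) : ∀ k, 1 ≤ k →
    Nat.card {a : Fin ℓ → ℤ // MP k ℓ a} = mf ℓ k := by
  induction ℓ with
  | zero =>
    intro k hk
    have h : ∀ a : Fin 0 → ℤ, MP k 0 a := fun a => ⟨fun i => i.elim0, fun i => i.elim0⟩
    rw [Nat.card_congr (Equiv.subtypeUnivEquiv h)]
    simp [mf, Nat.card_unique]
  | succ ℓ ih =>
    rintro (_ | _ | j) hk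
    · omega
    · rw [Nat.card_congr (splitEquiv (MP 1 (ℓ+1)) (MP 2 ℓ) (fun _ => False)
        (fun a h => h.1) (fun b => MP_cons_one b)
        (fun b => iff_false_intro (MP_cons_neg_one b)))]
      haveI := be_finite (MP 2 ℓ) (fun a h => h.1)
      haveI : IsEmpty {b : Fin ℓ → ℤ // False} := ⟨fun x => x.2⟩
      rw [Nat.card_sum, card_false_subtype, ih 2 (by omega)]
      simp [mf]
    · rw [Nat.card_congr (splitEquiv (MP (j+2) (ℓ+1)) (MP (j+3) ℓ) (MP (j+1) ℓ)
        (fun a h => h.1) (fun b => MP_cons_one b) (fun b => MP_cons_neg b))]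
      haveI := be_finite (MP (j+3) ℓ) (fun a h => h.1)
      haveI := be_finite (MP (j+1) ℓ) (fun a h => h.1)
      rw [Nat.card_sum, ih (j+3) (by omega), ih (j+1) (by omega)]
      simp [mf]

lemma Ecard_eq (ℓ : ℕ) : ∀ k, 1 ≤ k →
    Nat.card {a : Fin ℓ → ℤ // ExhaustedAtEnd k a} = ef ℓ k := by
  induction ℓ with
  | zero =>
    intro k hk
    haveI : IsEmpty {a : Fin 0 → ℤ // ExhaustedAtEnd k a} := by
      refine ⟨fun x => ?_⟩
      have := x.2.2.2
      simp only [Finset.univ_eq_empty, Finset.sum_empty] at this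
      omega
    rw [Nat.card_of_isEmpty]
    rcases k with _ | k
    · omega
    · simp [ef]
  | succ ℓ ih =>
    rintro (_ | _ | j) hk
    · omega
    · rcases ℓ with _ | ℓ
      · -- Eset 1 1 has exactly one element
        haveI : Unique {a : Fin 1 → ℤ // ExhaustedAtEnd 1 a} := by
          refine ⟨⟨⟨fun _ => -1, ⟨fun i => Or.inr rfl, fun i hi => by omega, by simp⟩⟩⟩,
            fun a => ?_⟩
          ext i
          have hs := a.2.2.2
          rw [Fin.sum_univ_one] at hs
          have : i = 0 := Subsingleton.elim i 0
          rw [this]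
          show a.1 0 = -1
          push_cast at hs
          linarith
        rw [Nat.card_unique]
        rfl
      · rw [Nat.card_congr (splitEquiv (fun a => ExhaustedAtEnd 1 a)
          (fun b => ExhaustedAtEnd 2 b) (fun _ => False)
          (fun a h => h.1) (fun b => EP_cons_one b)
          (fun b => iff_false_intro (EP_cons_neg_one b)))]
        haveI := be_finite (fun b : Fin (ℓ+1) → ℤ => ExhaustedAtEnd 2 b) (fun a h => h.1)
        haveI : IsEmpty {b : Fin (ℓ+1) → ℤ // False} := ⟨fun x => x.2⟩
        rw [Nat.card_sum, card_false_subtype, ih 2 (by omega)]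
        simp [ef]
    · rw [Nat.card_congr (splitEquiv (fun a => ExhaustedAtEnd (j+2) a)
        (fun b => ExhaustedAtEnd (j+3) b) (fun b => ExhaustedAtEnd (j+1) b)
        (fun a h => h.1) (fun b => EP_cons_one b) (fun b => EP_cons_neg b))]
      haveI := be_finite (fun b : Fin ℓ → ℤ => ExhaustedAtEnd (j+3) b) (fun a h => h.1)
      haveI := be_finite (fun b : Fin ℓ → ℤ => ExhaustedAtEnd (j+1) b) (fun a h => h.1)
      rw [Nat.card_sum, ih (j+3) (by omega), ih (j+1) (by omega)]
      simp [ef]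

lemma sum_choose_all {ℓ b : ℕ} (h : ℓ ≤ b) :
    ∑ n ∈ Finset.Icc 0 b, ℓ.choose n = 2^ℓ := by
  rw [← Nat.sum_range_choose ℓ]
  symm
  apply Finset.sum_subset
  · intro x hx
    simp only [Finset.mem_range] at hx
    simp only [Finset.mem_Icc]
    omega
  · intro x _ hx
    simp only [Finset.mem_range, not_lt] at hx
    exact Nat.choose_eq_zero_of_lt (by omega)

lemma sum_choose_almost {ℓ : ℕ} (hl : 1 ≤ ℓ) :
    ∑ n ∈ Finset.Icc 0 (ℓ-1), ℓ.choose n = 2^ℓ - 1 := by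
  have h := sum_choose_all (le_refl ℓ)
  obtain ⟨t, rfl⟩ : ∃ t, ℓ = t + 1 := ⟨ℓ - 1, by omega⟩
  rw [Finset.sum_Icc_succ_top (by omega)] at h
  simp only [Nat.choose_self] at h
  simp only [Nat.add_sub_cancel]
  omega

lemma sum_shift {a b : ℕ} (f : ℕ → ℕ) :
    ∑ n ∈ Finset.Icc (a+1) (b+1), f n = ∑ m ∈ Finset.Icc a b, f (m+1) := by
  rw [← Finset.map_add_right_Icc a b 1, Finset.sum_map]
  rfl

lemma mf_eq (ℓ : ℕ) : ∀ k, 1 ≤ k →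
    mf ℓ k = ∑ n ∈ Finset.Icc ((ℓ-k+1)/2) ((ℓ-k+1)/2 + (k-1)), ℓ.choose n := by
  induction ℓ with
  | zero =>
    intro k hk
    have hb : (0-k+1)/2 = 0 := by omega
    rw [hb]
    rw [Finset.sum_eq_single_of_mem 0 (by simp)]
    · simp [mf]
    · intro n _ hn
      exact Nat.choose_eq_zero_of_lt (by omega)
  | succ ℓ ih =>
    rintro (_ | _ | j) hk
    · omega
    · -- k = 1
      rcases ℓ with _ | t
      · decide
      · show mf (t+1) 2 = _
        rw [ih 2 (by omega)]
        have ha : ((t+1)-2+1)/2 = t/2 := by omega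
        have hb : ((t+2)-1+1)/2 = t/2 + 1 := by omega
        rw [ha, hb]
        rw [show t/2 + (2-1) = (t/2) + 1 from rfl]
        rw [Finset.sum_Icc_succ_top (by omega), Finset.Icc_self, Finset.sum_singleton,
          Finset.Icc_self, Finset.sum_singleton]
        exact (Nat.choose_succ_succ (t+1) (t/2)).symm
    · -- k = j + 2
      show mf ℓ (j+3) + mf ℓ (j+1) = _
      rw [ih (j+3) (by omega), ih (j+1) (by omega)]
      rcases lt_trichotomy ℓ (j+1) with hc | hc | hc
      · -- k ≥ ℓ + 2 : all full sums
        have h1 : (ℓ-(j+3)+1)/2 = 0 := by omega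
        have h2 : (ℓ-(j+1)+1)/2 = 0 := by omega
        have h3 : ((ℓ+1)-(j+2)+1)/2 = 0 := by omega
        rw [h1, h2, h3]
        rw [sum_choose_all (show ℓ ≤ 0 + (j+3-1) by omega),
            sum_choose_all (show ℓ ≤ 0 + (j+1-1) by omega),
            sum_choose_all (show ℓ+1 ≤ 0 + (j+2-1) by omega)]
        ring
      · -- k = ℓ + 1
        subst hc
        have h1 : ((j+1)-(j+3)+1)/2 = 0 := by omega
        have h2 : ((j+1)-(j+1)+1)/2 = 0 := by omega
        have h3 : ((j+1+1)-(j+2)+1)/2 = 0 := by omega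
        rw [h1, h2, h3]
        rw [sum_choose_all (show j+1 ≤ 0 + (j+3-1) by omega)]
        rw [show 0 + (j+1-1) = (j+1) - 1 by omega, sum_choose_almost (by omega)]
        rw [show 0 + (j+2-1) = (j+2) - 1 by omega, sum_choose_almost (by omega)]
        have h4 : 1 ≤ 2^(j+1) := Nat.one_le_two_pow
        have h5 : (2:ℕ)^(j+2) = 2^(j+1)*2 := by ring
        omega
      · -- generic: k ≤ ℓ
        set a := (ℓ - (j+2))/2 with hadef
        have h1 : (ℓ-(j+3)+1)/2 = a := by omega
        have h2 : (ℓ-(j+1)+1)/2 = a + 1 := by omega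
        have h3 : ((ℓ+1)-(j+2)+1)/2 = a + 1 := by omega
        rw [h1, h2, h3]
        rw [show a + (j+3-1) = a + (j+2) by omega,
            show a + 1 + (j+1-1) = a + (j+1) by omega,
            show a + 1 + (j+2-1) = a + (j+2) by omega]
        rw [show a + (j+2) = (a + (j+1)) + 1 by omega, sum_shift]
        have pascal : ∀ m, (ℓ+1).choose (m+1) = ℓ.choose m + ℓ.choose (m+1) :=
          fun m => Nat.choose_succ_succ ℓ m
        rw [Finset.sum_congr rfl (fun m _ => pascal m), Finset.sum_add_distrib]
        rw [← sum_shift (fun n => ℓ.choose n)]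
        rw [show (a + (j+1)) + 1 = a + (j+2) by omega]
        -- now: ∑ Icc a (a+j+1) C(ℓ) + ∑ Icc (a+1) (a+j+2) C(ℓ)
        --    = ∑ Icc a (a+j+2) C(ℓ) + ∑ Icc (a+1) (a+j+1) C(ℓ)
        rw [show a + (j+2) = (a + (j+1)) + 1 by omega]
        rw [Finset.sum_Icc_succ_top (show a ≤ a+(j+1)+1 by omega) (fun n => ℓ.choose n),
            Finset.sum_Icc_succ_top (show a+1 ≤ a+(j+1)+1 by omega) (fun n => ℓ.choose n)]
        rw [show a + (j+1) = (a+1) + j by omega]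
        ring

def cf (k : ℕ) : ℕ → ℕ
  | 0 => 1
  | m+1 => (2*(m+1)+k-1).choose (m+1) - (2*(m+1)+k-1).choose m

lemma choose_mono_succ {n r : ℕ} (h : r < n/2) : n.choose r ≤ n.choose (r+1) :=
  Nat.choose_le_succ_of_lt_half_left h

-- cf k (t+1) = cf (k+1) t + cf (k-1) (t+1) for k ≥ 2
lemma cf_rec (j t : ℕ) : cf (j+2) (t+1) = cf (j+3) t + cf (j+1) (t+1) := by
  rcases t with _ | t
  · -- t = 0 : C(k+1,1) - C(k+1,0) = 1 + (C(k,1) - C(k,0))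
    show (2*1+(j+2)-1).choose 1 - (2*1+(j+2)-1).choose 0 =
      1 + ((2*1+(j+1)-1).choose 1 - (2*1+(j+1)-1).choose 0)
    simp [Nat.choose_one_right]
    omega
  · show (2*(t+2)+(j+2)-1).choose (t+2) - (2*(t+2)+(j+2)-1).choose (t+1) =
      ((2*(t+1)+(j+3)-1).choose (t+1) - (2*(t+1)+(j+3)-1).choose t) +
      ((2*(t+2)+(j+1)-1).choose (t+2) - (2*(t+2)+(j+1)-1).choose (t+1))
    have e1 : 2*(t+2)+(j+2)-1 = (2*t+j+4)+1 := by omega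
    have e2 : 2*(t+1)+(j+3)-1 = 2*t+j+4 := by omega
    have e3 : 2*(t+2)+(j+1)-1 = 2*t+j+4 := by omega
    rw [e1, e2, e3]
    set n := 2*t+j+4 with hn
    have p1 : (n+1).choose (t+2) = n.choose (t+1) + n.choose (t+2) :=
      Nat.choose_succ_succ n (t+1)
    have p2 : (n+1).choose (t+1) = n.choose t + n.choose (t+1) :=
      Nat.choose_succ_succ n t
    have m1 : n.choose t ≤ n.choose (t+1) := choose_mono_succ (by omega)
    have m2 : n.choose (t+1) ≤ n.choose (t+2) := choose_mono_succ (by omega)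
    omega

-- cf 1 (t+1) = cf 2 t
lemma cf_rec1 (t : ℕ) : cf 1 (t+1) = cf 2 t := by
  rcases t with _ | t
  · decide
  · show (2*(t+2)+1-1).choose (t+2) - (2*(t+2)+1-1).choose (t+1) =
      (2*(t+1)+2-1).choose (t+1) - (2*(t+1)+2-1).choose t
    have e1 : 2*(t+2)+1-1 = (2*t+3)+1 := by omega
    have e2 : 2*(t+1)+2-1 = 2*t+3 := by omega
    rw [e1, e2]
    set n := 2*t+3 with hn
    have p1 : (n+1).choose (t+2) = n.choose (t+1) + n.choose (t+2) :=
      Nat.choose_succ_succ n (t+1)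
    have p2 : (n+1).choose (t+1) = n.choose t + n.choose (t+1) :=
      Nat.choose_succ_succ n t
    have symm : n.choose (t+2) = n.choose (t+1) := by
      have := Nat.choose_symm (show t+2 ≤ n by omega)
      rw [show n - (t+2) = t+1 by omega] at this
      exact this.symm
    have m1 : n.choose t ≤ n.choose (t+1) := choose_mono_succ (by omega)
    omega

lemma ef_eq (ℓ : ℕ) : ∀ k, 1 ≤ k →
    ef ℓ k = if k ≤ ℓ ∧ (ℓ - k) % 2 = 0 then cf k ((ℓ-k)/2) else 0 := by
  induction ℓ with
  | zero =>
    rintro (_ | k) hk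
    · omega
    · show (if k+1 = 0 then (1:ℕ) else 0) = _
      rw [if_neg (by omega), if_neg (by omega)]
  | succ ℓ ih =>
    rintro (_ | _ | j) hk
    · omega
    · -- k = 1
      show ef ℓ 2 + (if ℓ = 0 then 1 else 0) = _
      rcases ℓ with _ | t
      · norm_num [ef, cf]
      · rw [if_neg (Nat.succ_ne_zero t), add_zero, ih 2 (by omega)]
        rcases Nat.even_or_odd t with ⟨s, rfl⟩ | ⟨s, rfl⟩
        · -- t even: both sides 0
          rw [if_neg (by omega), if_neg (by omega)]
        · -- t odd
          rw [if_pos (by omega), if_pos (by omega)]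
          rw [show (2*s+1+1-2)/2 = s by omega, show (2*s+1+1+1-1)/2 = s+1 by omega]
          exact (cf_rec1 s).symm
    · -- k = j+2
      show ef ℓ (j+3) + ef ℓ (j+1) = _
      rw [ih (j+3) (by omega), ih (j+1) (by omega)]
      by_cases hc : j+2 ≤ ℓ+1 ∧ (ℓ+1-(j+2)) % 2 = 0
      · rw [if_pos hc]
        obtain ⟨m, hm⟩ : ∃ m, ℓ+1-(j+2) = 2*m := ⟨(ℓ+1-(j+2))/2, by omega⟩
        rcases m with _ | t
        · -- ℓ = j+1
          have hℓ : ℓ = j+1 := by omega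
          subst hℓ
          rw [if_neg (by omega), if_pos (by omega)]
          rw [show (j+1+1-(j+2))/2 = 0 by omega, show (j+1-(j+1))/2 = 0 by omega]
          rfl
        · rw [if_pos (by omega), if_pos (by omega)]
          rw [show (ℓ+1-(j+2))/2 = t+1 by omega, show (ℓ-(j+3))/2 = t by omega,
            show (ℓ-(j+1))/2 = t+1 by omega]
          exact (cf_rec j t).symm
      · rw [if_neg hc, if_neg (by omega), if_neg (by omega)]

noncomputable def sigmaEquiv (d k : ℕ) :
    {p : Σ ℓ : ℕ, Fin ℓ → ℤ // p.1 ≤ d ∧ ExhaustedAtEnd k p.2} ≃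
      Σ i : Fin (d+1), {a : Fin (i : ℕ) → ℤ // ExhaustedAtEnd k a} where
  toFun p := ⟨⟨p.1.1, by omega⟩, ⟨p.1.2, p.2.2⟩⟩
  invFun q := ⟨⟨(q.1 : ℕ), q.2.1⟩, ⟨Nat.lt_succ_iff.mp q.1.isLt, q.2.2⟩⟩
  left_inv p := rfl
  right_inv q := rfl

lemma card_sigma_eq (d k : ℕ) (hk : 1 ≤ k) :
    Nat.card {p : Σ ℓ : ℕ, Fin ℓ → ℤ // p.1 ≤ d ∧ ExhaustedAtEnd k p.2}
      = ∑ ℓ ∈ Finset.range (d+1), ef ℓ k := by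
  rw [Nat.card_congr (sigmaEquiv d k)]
  haveI inst : ∀ i : Fin (d+1), Fintype {a : Fin (i:ℕ) → ℤ // ExhaustedAtEnd k a} :=
    fun i => @Fintype.ofFinite _ (be_finite _ (fun a h => h.1))
  rw [Nat.card_eq_fintype_card, Fintype.card_sigma]
  rw [← Fin.sum_univ_eq_sum_range (fun ℓ => ef ℓ k) (d+1)]
  refine Finset.sum_congr rfl (fun i _ => ?_)
  rw [← Nat.card_eq_fintype_card, Ecard_eq _ k hk]

lemma sum_ef_eq (d k : ℕ) (hk : 1 ≤ k) (hkd : k ≤ d) :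
    ∑ ℓ ∈ Finset.range (d+1), ef ℓ k = ∑ m ∈ Finset.Icc 0 ((d-k)/2), cf k m := by
  have h2 : ∑ m ∈ Finset.Icc 0 ((d-k)/2), cf k m
      = ∑ m ∈ Finset.Icc 0 ((d-k)/2), ef (2*m+k) k := by
    refine Finset.sum_congr rfl (fun m hm => ?_)
    rw [ef_eq _ k hk, if_pos (by omega), show (2*m+k-k)/2 = m by omega]
  have hinj : ∀ x ∈ Finset.Icc 0 ((d-k)/2), ∀ y ∈ Finset.Icc 0 ((d-k)/2),
      2*x+k = 2*y+k → x = y := fun x _ y _ h => by omega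
  have h3 : ∑ m ∈ Finset.Icc 0 ((d-k)/2), ef (2*m+k) k
      = ∑ ℓ ∈ (Finset.Icc 0 ((d-k)/2)).image (fun m => 2*m+k), ef ℓ k :=
    (Finset.sum_image (f := fun ℓ => ef ℓ k) hinj).symm
  rw [h2, h3]
  symm
  apply Finset.sum_subset
  · intro x hx
    simp only [Finset.mem_image, Finset.mem_Icc] at hx
    simp only [Finset.mem_range]
    omega
  · intro x hx hnx
    rw [ef_eq x k hk]
    by_cases hc : k ≤ x ∧ (x - k) % 2 = 0
    · exfalso
      apply hnx
      simp only [Finset.mem_image, Finset.mem_Icc]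
      simp only [Finset.mem_range] at hx
      exact ⟨(x-k)/2, by omega, by omega⟩
    · rw [if_neg hc]

lemma chooseInt_nat (a t : ℕ) : chooseInt a ((t:ℤ)) = (a.choose t : ℤ) := by
  unfold chooseInt
  rw [if_pos (Int.natCast_nonneg t), Int.toNat_natCast]

lemma cf_int (k : ℕ) (hk : 1 ≤ k) (m : ℕ) (hm : 1 ≤ m) :
    ((cf k m : ℕ) : ℤ)
      = (((2 * m + k - 1).choose m : ℤ) - chooseInt (2 * m + k - 1) ((m : ℤ) - 1)) := by
  obtain ⟨t, rfl⟩ : ∃ t, m = t + 1 := ⟨m - 1, by omega⟩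
  have hb : ((t+1:ℕ):ℤ) - 1 = (t:ℤ) := by push_cast; ring
  rw [hb, chooseInt_nat]
  show (((2*(t+1)+k-1).choose (t+1) - (2*(t+1)+k-1).choose t : ℕ) : ℤ) = _
  have hle : (2*(t+1)+k-1).choose t ≤ (2*(t+1)+k-1).choose (t+1) := by
    apply Nat.choose_le_succ_of_lt_half_left
    omega
  rw [Nat.cast_sub hle]

lemma key_identity (k : ℕ) (hk : 1 ≤ k) (m : ℕ) :
    ((2 * m + k : ℕ) : ℤ)
        * (((2 * m + k - 1).choose m : ℤ) - chooseInt (2 * m + k - 1) ((m : ℤ) - 1))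
      = (k : ℤ) * ((2 * m + k).choose m : ℤ) := by
  rcases m with _ | t
  · have : ((0:ℕ):ℤ) - 1 = (-1 : ℤ) := by norm_num
    rw [this]
    unfold chooseInt
    rw [if_neg (by norm_num)]
    simp
  · have hb : ((t+1:ℕ):ℤ) - 1 = (t:ℤ) := by push_cast; ring
    rw [hb, chooseInt_nat]
    have e1 : 2*(t+1)+k-1 = 2*t+k+1 := by omega
    have e2 : 2*(t+1)+k = 2*t+k+2 := by omega
    rw [e1, e2]
    set n := 2*t+k+1 with hn
    have f1 : (n+1) * n.choose t = (n+1).choose (t+1) * (t+1) :=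
      Nat.add_one_mul_choose_eq n t
    have f2 : (n+1) * n.choose (t+1) = (n+1).choose (t+2) * (t+2) :=
      Nat.add_one_mul_choose_eq n (t+1)
    have f3 : (n+1).choose (t+2) * (t+2) = (n+1).choose (t+1) * ((n+1) - (t+1)) := by
      have := Nat.choose_succ_right_eq (n+1) (t+1)
      exact this
    have hsub : (n+1) - (t+1) = t+k+1 := by omega
    rw [hsub] at f3
    have h1 : ((n:ℤ)+1) * (n.choose t : ℤ) = ((n+1).choose (t+1) : ℤ) * ((t:ℤ)+1) := by
      exact_mod_cast congrArg (Nat.cast : ℕ → ℤ) f1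
    have h2 : ((n:ℤ)+1) * (n.choose (t+1) : ℤ) = ((n+1).choose (t+1) : ℤ) * ((t:ℤ)+(k:ℤ)+1) := by
      have := f2.trans f3
      exact_mod_cast congrArg (Nat.cast : ℕ → ℤ) this
    have hcast : ((2*t+k+2 : ℕ) : ℤ) = (n:ℤ) + 1 := by rw [hn]; push_cast; ring
    have hch : (2*t+k+2).choose (t+1) = (n+1).choose (t+1) := by rw [hn]
    rw [hcast, hch]
    linear_combination h2 - h1


/-- with `α = ⌊(d-k)/2⌋` and `β = ⌊(d-k+1)/2⌋`, the Bonus-Eggs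
egg-drop number `H_{B,k}(d) = Z_k(d) - 1 + M_k(d)` equals
`∑_{m=1}^{α} (k/(2m+k)) C(2m+k, m) + ∑_{n=β}^{β+k-1} C(d, n)`, where
`(k/(2m+k)) C(2m+k, m) = C(2m+k-1, m) - C(2m+k-1, m-1)` is an integer. -/
theorem bonus_eggs_drop_number (k d : ℕ) (hk : 1 ≤ k) (hkd : k ≤ d) :
    ((Nat.card {p : Σ ℓ : ℕ, Fin ℓ → ℤ //
          p.1 ≤ d ∧ ExhaustedAtEnd k p.2} : ℕ) : ℤ) - 1
      + ((Nat.card {a : Fin d → ℤ //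
          (∀ i, a i = 1 ∨ a i = -1) ∧ ∀ i : Fin d, -(k : ℤ) < partialSum a i} : ℕ) : ℤ)
      = (∑ m ∈ Finset.Icc 1 ((d - k) / 2),
            (((2 * m + k - 1).choose m : ℤ) - chooseInt (2 * m + k - 1) ((m : ℤ) - 1)))
        + ∑ n ∈ Finset.Icc ((d - k + 1) / 2) ((d - k + 1) / 2 + k - 1), (d.choose n : ℤ) ∧
    ∀ m : ℕ, ((2 * m + k : ℕ) : ℤ)
          * (((2 * m + k - 1).choose m : ℤ) - chooseInt (2 * m + k - 1) ((m : ℤ) - 1))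
        = (k : ℤ) * ((2 * m + k).choose m : ℤ) := by
  constructor
  · have hM : Nat.card {a : Fin d → ℤ //
        (∀ i, a i = 1 ∨ a i = -1) ∧ ∀ i : Fin d, -(k : ℤ) < partialSum a i} = mf d k :=
      Mcard_eq d k hk
    rw [card_sigma_eq d k hk, sum_ef_eq d k hk hkd, hM, mf_eq d k hk]
    have hsplit : ∑ m ∈ Finset.Icc 0 ((d-k)/2), cf k m
        = 1 + ∑ m ∈ Finset.Icc 1 ((d-k)/2), cf k m := by
      rw [Finset.Icc_eq_cons_Ioc (Nat.zero_le _), Finset.sum_cons,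
        ← Finset.Icc_add_one_left_eq_Ioc 0 ((d-k)/2)]
      rfl
    rw [hsplit]
    have hS : ((∑ m ∈ Finset.Icc 1 ((d-k)/2), cf k m : ℕ) : ℤ)
        = ∑ m ∈ Finset.Icc 1 ((d-k)/2),
            (((2 * m + k - 1).choose m : ℤ) - chooseInt (2 * m + k - 1) ((m : ℤ) - 1)) := by
      rw [Nat.cast_sum]
      exact Finset.sum_congr rfl (fun m hm =>
        cf_int k hk m (by simpa using (Finset.mem_Icc.mp hm).1))
    have hidx : (d-k+1)/2 + (k-1) = (d-k+1)/2 + k - 1 := by clear hS hsplit hM; omega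
    simp only [hidx]
    push_cast [hS]
    ring
  · exact fun m => key_identity k hk m
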